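/- arXiv:1902.05157 — 7 statements merged into one kernel-verified Lean document; each statement's English description precedes it below -/
import Mathlib

section
/- Let A be an n×n real symmetric positive definite matrix and M an n×n real matrix such that M + Mᵀ - A is symmetric positive definite. Then the operator norm of I - M⁻¹A in the A-inner product satisfies ‖I - M⁻¹A‖_A < 1. -/
/-!
Put `w = M⁻¹ A v`, so that `(1 - M⁻¹ A) v = v - w` and `M w = A v`. Expanding with `A`
symmetric gives `‖v - w‖²_A = ‖v‖²_A - wᵀ (M + Mᵀ - A) w`. The subtracted term is a positive
definite quadratic form in `v`, and by compactness of the unit sphere it dominates `δ ‖v‖²_A`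
for some `δ > 0`; hence `‖I - M⁻¹ A‖_A ≤ √(1 - δ) < 1`.
-/

open Matrix

/-- The `A`-norm of a vector, `‖v‖_A = √(vᵀ A v)`. -/
noncomputable def anorm {n : ℕ} (A : Matrix (Fin n) (Fin n) ℝ) (v : Fin n → ℝ) : ℝ :=
  Real.sqrt (v ⬝ᵥ A.mulVec v)

/-- The operator norm of a matrix `E` induced by the `A`-norm. -/
noncomputable def opNormA {n : ℕ} (A E : Matrix (Fin n) (Fin n) ℝ) : ℝ :=
  ⨆ v : {v : Fin n → ℝ // v ≠ 0}, anorm A (E.mulVec v) / anorm A v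

theorem exists_pos_mul_le_of_homogeneous {E : Type*} [NormedAddCommGroup E] [NormedSpace ℝ E]
    [FiniteDimensional ℝ E] {f g : E → ℝ} (hf : Continuous f) (hg : Continuous g)
    (hf_smul : ∀ (c : ℝ) x, f (c • x) = c ^ 2 * f x)
    (hg_smul : ∀ (c : ℝ) x, g (c • x) = c ^ 2 * g x)
    (hg_pos : ∀ x ≠ 0, 0 < g x) :
    ∃ δ > 0, ∀ x, δ * f x ≤ g x := by
  have hne : ∀ u ∈ Metric.sphere (0 : E) 1, u ≠ 0 := by
    rintro u hu rfl
    simp at hu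
  obtain ⟨C, hC⟩ := (isCompact_sphere (0 : E) 1).exists_bound_of_continuousOn
    (hf.continuousOn.div hg.continuousOn fun u hu => (hg_pos u (hne u hu)).ne')
  refine ⟨(|C| + 1)⁻¹, by positivity, fun x => ?_⟩
  rcases eq_or_ne x 0 with rfl | hx
  · have hf0 : f 0 = 0 := by simpa using hf_smul 0 0
    have hg0 : g 0 = 0 := by simpa using hg_smul 0 0
    simp [hf0, hg0]
  have hx_norm : 0 < ‖x‖ := norm_pos_iff.2 hx
  set u := ‖x‖⁻¹ • x
  have hu : u ∈ Metric.sphere (0 : E) 1 := by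
    simp [u, norm_smul, inv_mul_cancel₀ hx_norm.ne']
  have hxu : x = ‖x‖ • u := by simp [u, smul_smul, mul_inv_cancel₀ hx_norm.ne']
  have hfu : f u ≤ (|C| + 1) * g u := by
    have hCu : |f u / g u| ≤ C := hC u hu
    rw [← div_le_iff₀ (hg_pos u (hne u hu))]
    linarith [le_abs_self (f u / g u), le_abs_self C]
  rw [hxu, hf_smul, hg_smul, inv_mul_le_iff₀ (by positivity)]
  nlinarith [sq_nonneg ‖x‖]

section QuadraticForm

variable {ι : Type*} [Fintype ι]

theorem smul_dotProduct_mulVec_smul {R : Type*} [CommSemiring R] (A : Matrix ι ι R) (c : R)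
    (x : ι → R) : (c • x) ⬝ᵥ A *ᵥ (c • x) = c ^ 2 * (x ⬝ᵥ A *ᵥ x) := by
  simp only [mulVec_smul, dotProduct_smul, smul_dotProduct, smul_eq_mul]
  ring

theorem Matrix.PosDef.exists_pos_mul_dotProduct_mulVec_le {A B : Matrix ι ι ℝ}
    (hB : B.PosDef) :
    ∃ δ > 0, ∀ x, δ * (x ⬝ᵥ A *ᵥ x) ≤ x ⬝ᵥ B *ᵥ x := by
  have hcont : ∀ C : Matrix ι ι ℝ, Continuous fun x : ι → ℝ => x ⬝ᵥ C *ᵥ x := fun C =>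
    continuous_id.dotProduct (continuous_const.matrix_mulVec continuous_id)
  exact exists_pos_mul_le_of_homogeneous (hcont A) (hcont B) (smul_dotProduct_mulVec_smul A)
    (smul_dotProduct_mulVec_smul B) fun x hx => by simpa using hB.dotProduct_mulVec_pos hx

theorem sub_dotProduct_mulVec_sub_of_mulVec_eq {R : Type*} [CommRing R] {A M : Matrix ι ι R}
    (hA : Aᵀ = A) {v w : ι → R} (hw : M *ᵥ w = A *ᵥ v) :
    (v - w) ⬝ᵥ A *ᵥ (v - w) = v ⬝ᵥ A *ᵥ v - w ⬝ᵥ (M + Mᵀ - A) *ᵥ w := by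
  have hvw : v ⬝ᵥ A *ᵥ w = w ⬝ᵥ M *ᵥ w := by
    rw [dotProduct_mulVec, ← hA, vecMul_transpose, ← hw, dotProduct_comm]
  have hMt : w ⬝ᵥ Mᵀ *ᵥ w = w ⬝ᵥ M *ᵥ w := by
    rw [dotProduct_mulVec, vecMul_transpose, dotProduct_comm]
  simp only [mulVec_sub, sub_mulVec, add_mulVec, dotProduct_sub, sub_dotProduct, dotProduct_add]
  rw [hvw, ← hw, hMt]
  ring

theorem dotProduct_transpose_mul_mul_mulVec {κ R : Type*} [Fintype κ] [CommSemiring R]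
    (K : Matrix ι κ R) (B : Matrix ι ι R) (x : κ → R) :
    x ⬝ᵥ (Kᵀ * B * K) *ᵥ x = (K *ᵥ x) ⬝ᵥ B *ᵥ (K *ᵥ x) := by
  rw [← mulVec_mulVec, ← mulVec_mulVec, dotProduct_mulVec, vecMul_transpose]

end QuadraticForm

theorem anorm_le_sqrt_mul {n : ℕ} {A : Matrix (Fin n) (Fin n) ℝ} (hA : A.PosSemidef)
    {x y : Fin n → ℝ} {c : ℝ} (h : x ⬝ᵥ A *ᵥ x ≤ c * (y ⬝ᵥ A *ᵥ y)) :
    anorm A x ≤ √c * anorm A y := by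
  rw [anorm, anorm, ← Real.sqrt_mul' _ (by simpa using hA.dotProduct_mulVec_nonneg y)]
  exact Real.sqrt_le_sqrt h

theorem opNormA_le {n : ℕ} {A E : Matrix (Fin n) (Fin n) ℝ} {c : ℝ} (hc : 0 ≤ c)
    (h : ∀ v, anorm A (E *ᵥ v) ≤ c * anorm A v) : opNormA A E ≤ c :=
  Real.iSup_le (fun v => div_le_of_le_mul₀ (Real.sqrt_nonneg _) hc (h v)) hc

theorem relaxation_A_convergent {n : ℕ} (A M : Matrix (Fin n) (Fin n) ℝ)
    (hA : A.PosDef) (hM : IsUnit M.det) (hMA : (M + Mᵀ - A).PosDef) :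
    opNormA A (1 - M⁻¹ * A) < 1 := by
  set K := M⁻¹ * A
  have hK : Function.Injective K.mulVec := mulVec_injective_iff_isUnit.2 <|
    (isUnit_nonsing_inv_iff.2 ((isUnit_iff_isUnit_det M).2 hM)).mul hA.isUnit
  have hB : (Kᵀ * (M + Mᵀ - A) * K).PosDef := by
    simpa only [conjTranspose_eq_transpose_of_trivial] using hMA.conjTranspose_mul_mul_same hK
  obtain ⟨δ, hδ, hδle⟩ := hB.exists_pos_mul_dotProduct_mulVec_le (A := A)
  have hMK : ∀ v, M *ᵥ (K *ᵥ v) = A *ᵥ v := fun v => by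
    rw [mulVec_mulVec, ← Matrix.mul_assoc, mul_nonsing_inv _ hM, Matrix.one_mul]
  refine (opNormA_le (c := √(1 - δ)) (Real.sqrt_nonneg _) fun v =>
    anorm_le_sqrt_mul hA.posSemidef ?_).trans_lt ((Real.sqrt_lt' one_pos).2 (by linarith))
  rw [sub_mulVec, one_mulVec,
    sub_dotProduct_mulVec_sub_of_mulVec_eq (by simpa using hA.isHermitian.eq) (hMK v)]
  linarith [dotProduct_transpose_mul_mul_mulVec K (M + Mᵀ - A) v ▸ hδle v]
end

section
/- Let A be SPD, M invertible with M + Mᵀ − A SPD, and define M̃ = Mᵀ(M + Mᵀ − A)⁻¹M. Then I − M̃⁻¹A = (I − M⁻¹A)(I − M⁻ᵀA). -/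
open Matrix

theorem symmetrized_relaxation_identity {n : ℕ}
    (A M : Matrix (Fin n) (Fin n) ℝ) (hA : A.PosDef)
    (hM : IsUnit M.det) (hMA : (M + Mᵀ - A).PosDef) :
    1 - (Mᵀ * (M + Mᵀ - A)⁻¹ * M)⁻¹ * A = (1 - M⁻¹ * A) * (1 - (Mᵀ)⁻¹ * A) := by
  have hMT : IsUnit Mᵀ.det := by rwa [Matrix.det_transpose]
  have hS : IsUnit (M + Mᵀ - A).det := isUnit_iff_ne_zero.mpr hMA.det_pos.ne'
  have h1 : (Mᵀ * (M + Mᵀ - A)⁻¹ * M)⁻¹ = M⁻¹ * (M + Mᵀ - A) * (Mᵀ)⁻¹ := by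
    rw [Matrix.mul_inv_rev, Matrix.mul_inv_rev, Matrix.nonsing_inv_nonsing_inv _ hS,
      mul_assoc]
  rw [h1]
  have hMM : M⁻¹ * M = 1 := Matrix.nonsing_inv_mul _ hM
  have hMMT : Mᵀ * (Mᵀ)⁻¹ = 1 := Matrix.mul_nonsing_inv _ hMT
  have key : M⁻¹ * (M + Mᵀ - A) * (Mᵀ)⁻¹ * A
      = (Mᵀ)⁻¹ * A + M⁻¹ * A - M⁻¹ * A * ((Mᵀ)⁻¹ * A) := by
    have : M⁻¹ * (M + Mᵀ - A) = 1 + M⁻¹ * Mᵀ - M⁻¹ * A := by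
      rw [mul_sub, mul_add, hMM]
    rw [this]
    rw [sub_mul, sub_mul, add_mul, add_mul, one_mul]
    rw [mul_assoc M⁻¹ Mᵀ (Mᵀ)⁻¹, hMMT, mul_one]
    noncomm_ring
  rw [key]
  noncomm_ring
end

section
/- Let A be SPD, M invertible with M + Mᵀ − A SPD, and M̃ = Mᵀ(M + Mᵀ − A)⁻¹M. Then M̃ is symmetric positive definite and M̃ − A is positive semidefinite (equivalently, vᵀAv ≤ vᵀM̃v for all v). -/
/-!
With `N = M + Mᵀ - A`, one has `A = M + Mᵀ - N`, and the congruence identity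
`Mᵀ N⁻¹ M - (M + Mᵀ - N) = (N⁻¹ M - 1)ᵀ N (N⁻¹ M - 1)` exhibits `M̃ - A` as a congruence
of the positive definite `N`, hence positive semidefinite. Positive definiteness of `M̃` is the
congruence of `N⁻¹` by the invertible `M`.
-/

open Matrix

namespace Matrix

variable {n K : Type*} [Fintype n] [DecidableEq n] [Field K] [StarRing K]

theorem conjTranspose_mul_inv_mul_sub_eq {M N : Matrix n n K} (hN : N.IsHermitian)
    (hNunit : IsUnit N) :
    Mᴴ * N⁻¹ * M - (M + Mᴴ - N) = (N⁻¹ * M - 1)ᴴ * N * (N⁻¹ * M - 1) := by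
  have hNdet := (isUnit_iff_isUnit_det N).1 hNunit
  have hNinv : N⁻¹ᴴ = N⁻¹ := by rw [conjTranspose_nonsing_inv, hN.eq]
  have hleft : (Mᴴ * N⁻¹ - 1) * N = Mᴴ - N := by
    rw [sub_mul, nonsing_inv_mul_cancel_right N _ hNdet, one_mul]
  have hright : (Mᴴ - N) * (N⁻¹ * M - 1) = Mᴴ * N⁻¹ * M - Mᴴ - M + N := by
    rw [sub_mul, mul_sub, mul_sub, mul_nonsing_inv_cancel_left N _ hNdet, mul_assoc, mul_one,
      mul_one]
    abel
  rw [conjTranspose_sub, conjTranspose_mul, hNinv, conjTranspose_one, hleft, hright]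
  abel

variable [PartialOrder K]

theorem PosDef.posSemidef_conjTranspose_mul_inv_mul_sub {M N : Matrix n n K} (hN : N.PosDef) :
    (Mᴴ * N⁻¹ * M - (M + Mᴴ - N)).PosSemidef := by
  rw [conjTranspose_mul_inv_mul_sub_eq hN.isHermitian hN.isUnit]
  exact hN.posSemidef.conjTranspose_mul_mul_same _

theorem PosDef.conjTranspose_mul_inv_mul {M N : Matrix n n K} (hN : N.PosDef) (hM : IsUnit M) :
    (Mᴴ * N⁻¹ * M).PosDef :=
  (hM.posDef_star_left_conjugate_iff).2 hN.inv

end Matrix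

theorem symmetrized_relaxation_SPD_general {n : ℕ}
    (A M : Matrix (Fin n) (Fin n) ℝ)
    (hM : IsUnit M.det) (hMA : (M + Mᵀ - A).PosDef) :
    (Mᵀ * (M + Mᵀ - A)⁻¹ * M).PosDef ∧
      (Mᵀ * (M + Mᵀ - A)⁻¹ * M - A).PosSemidef := by
  rw [← conjTranspose_eq_transpose_of_trivial] at hMA ⊢
  refine ⟨hMA.conjTranspose_mul_inv_mul ((isUnit_iff_isUnit_det M).2 hM), ?_⟩
  simpa only [add_sub_sub_cancel, sub_sub_cancel] using
    hMA.posSemidef_conjTranspose_mul_inv_mul_sub (M := M)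

theorem symmetrized_relaxation_SPD {n : ℕ}
    (A M : Matrix (Fin n) (Fin n) ℝ) (hA : A.PosDef)
    (hM : IsUnit M.det) (hMA : (M + Mᵀ - A).PosDef) :
    (Mᵀ * (M + Mᵀ - A)⁻¹ * M).PosDef ∧
      (Mᵀ * (M + Mᵀ - A)⁻¹ * M - A).PosSemidef :=
  symmetrized_relaxation_SPD_general A M hM hMA
end

section
/- Let X and M̃ be SPD n×n matrices with c₁ vᵀXv ≤ vᵀM̃v ≤ c₂ vᵀXv for all v, where 0 < c₁ ≤ c₂. Let P have full column rank and let π_X = P(PᵀXP)⁻¹PᵀX and π_{M̃} = P(PᵀM̃P)⁻¹PᵀM̃ be the corresponding orthogonal projections onto range(P). Then for all v: ‖(I − π_X)v‖_X² ≤ (1/c₁)‖(I − π_{M̃})v‖_{M̃}² and ‖(I − π_{M̃})v‖_{M̃}² ≤ c₂‖(I − π_X)v‖_X². -/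
/-! The `A`-orthogonal projection onto `range P` is the best approximation from `range P` in the
`A`-norm. So the `X`-error of `π_X` is at most the `X`-error of `π_M̃`, which is at most
`1/c₁` times its `M̃`-error; symmetrically, the `M̃`-error of `π_M̃` is at most the `M̃`-error
of `π_X`, which is at most `c₂` times its `X`-error. -/

open Matrix

section OrthProj

variable {R : Type*} [CommRing R] {m k : Type*} [Fintype m] [DecidableEq m] [Fintype k]
  [DecidableEq k]

noncomputable def orthProj (A : Matrix m m R) (P : Matrix m k R) : Matrix m m R :=
  P * (Pᵀ * A * P)⁻¹ * Pᵀ * A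

lemma one_sub_orthProj_mulVec (A : Matrix m m R) (P : Matrix m k R) (v : m → R) :
    (1 - orthProj A P) *ᵥ v = v - P *ᵥ (((Pᵀ * A * P)⁻¹ * Pᵀ * A) *ᵥ v) := by
  simp only [orthProj, sub_mulVec, one_mulVec, mulVec_mulVec, Matrix.mul_assoc]

lemma transpose_mul_mul_one_sub_orthProj {A : Matrix m m R} {P : Matrix m k R}
    (hP : IsUnit (Pᵀ * A * P).det) : Pᵀ * A * (1 - orthProj A P) = 0 := by
  have hcancel : Pᵀ * A * orthProj A P = (Pᵀ * A * P) * (Pᵀ * A * P)⁻¹ * (Pᵀ * A) := by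
    simp only [orthProj, Matrix.mul_assoc]
  rw [Matrix.mul_sub, Matrix.mul_one, hcancel, mul_nonsing_inv _ hP, Matrix.one_mul, sub_self]

lemma mulVec_dotProduct_mulVec_one_sub_orthProj {A : Matrix m m R} {P : Matrix m k R}
    (hP : IsUnit (Pᵀ * A * P).det) (w : k → R) (v : m → R) :
    (P *ᵥ w) ⬝ᵥ A *ᵥ ((1 - orthProj A P) *ᵥ v) = 0 := by
  rw [dotProduct_comm, ← dotProduct_transpose_mulVec, mulVec_mulVec, mulVec_mulVec,
    transpose_mul_mul_one_sub_orthProj hP, zero_mulVec, dotProduct_zero]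

end OrthProj

lemma isUnit_det_transpose_mul_mul {m k : Type*} [Fintype m] [Fintype k] [DecidableEq k]
    {A : Matrix m m ℝ} {P : Matrix m k ℝ} (hA : A.PosDef) (hP : Function.Injective P.mulVec) :
    IsUnit (Pᵀ * A * P).det := by
  simpa using (hA.conjTranspose_mul_mul_same hP).isUnit.map detMonoidHom

section BestApproximation

variable {m k : Type*} [Fintype m] [DecidableEq m] [Fintype k] [DecidableEq k]
  {A : Matrix m m ℝ} {P : Matrix m k ℝ}

lemma one_sub_orthProj_dotProduct_le (hA : A.PosSemidef) (hP : IsUnit (Pᵀ * A * P).det)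
    (v : m → ℝ) (w : k → ℝ) :
    ((1 - orthProj A P) *ᵥ v) ⬝ᵥ A *ᵥ ((1 - orthProj A P) *ᵥ v)
      ≤ (v - P *ᵥ w) ⬝ᵥ A *ᵥ (v - P *ᵥ w) := by
  set e := (1 - orthProj A P) *ᵥ v
  set p := P *ᵥ (((Pᵀ * A * P)⁻¹ * Pᵀ * A) *ᵥ v - w)
  have hdecomp : v - P *ᵥ w = e + p := by
    simp only [e, p, one_sub_orthProj_mulVec, mulVec_sub]
    abel
  have hpe : p ⬝ᵥ A *ᵥ e = 0 := mulVec_dotProduct_mulVec_one_sub_orthProj hP _ v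
  have hep : e ⬝ᵥ A *ᵥ p = 0 := by
    have hsymm : Aᵀ = A := by simpa using hA.isHermitian.eq
    rw [← hsymm, dotProduct_transpose_mulVec, hpe]
  have hp : 0 ≤ p ⬝ᵥ A *ᵥ p := by simpa using hA.dotProduct_mulVec_nonneg p
  rw [hdecomp]
  simp only [mulVec_add, dotProduct_add, add_dotProduct, hpe, hep]
  linarith

lemma one_sub_orthProj_dotProduct_le_of_orthProj (hA : A.PosSemidef)
    (hP : IsUnit (Pᵀ * A * P).det) (B : Matrix m m ℝ) (v : m → ℝ) :
    ((1 - orthProj A P) *ᵥ v) ⬝ᵥ A *ᵥ ((1 - orthProj A P) *ᵥ v)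
      ≤ ((1 - orthProj B P) *ᵥ v) ⬝ᵥ A *ᵥ ((1 - orthProj B P) *ᵥ v) := by
  rw [one_sub_orthProj_mulVec B]
  exact one_sub_orthProj_dotProduct_le hA hP v _

end BestApproximation

theorem projection_spectral_equivalence_general {n nc : ℕ}
    (X Mt : Matrix (Fin n) (Fin n) ℝ) (hX : X.PosDef) (hMt : Mt.PosDef)
    (c₁ c₂ : ℝ) (hc₁ : 0 < c₁)
    (hequiv : ∀ v : Fin n → ℝ,
      c₁ * (v ⬝ᵥ X.mulVec v) ≤ v ⬝ᵥ Mt.mulVec v ∧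
        v ⬝ᵥ Mt.mulVec v ≤ c₂ * (v ⬝ᵥ X.mulVec v))
    (P : Matrix (Fin n) (Fin nc) ℝ) (hP : Function.Injective P.mulVec)
    (piX piM : Matrix (Fin n) (Fin n) ℝ)
    (hpiX : piX = P * (Pᵀ * X * P)⁻¹ * Pᵀ * X)
    (hpiM : piM = P * (Pᵀ * Mt * P)⁻¹ * Pᵀ * Mt) :
    ∀ v : Fin n → ℝ,
      ((1 - piX).mulVec v) ⬝ᵥ X.mulVec ((1 - piX).mulVec v)
          ≤ (1 / c₁) * (((1 - piM).mulVec v) ⬝ᵥ Mt.mulVec ((1 - piM).mulVec v)) ∧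
      ((1 - piM).mulVec v) ⬝ᵥ Mt.mulVec ((1 - piM).mulVec v)
          ≤ c₂ * (((1 - piX).mulVec v) ⬝ᵥ X.mulVec ((1 - piX).mulVec v)) := by
  intro v
  subst hpiX hpiM
  have hXP := isUnit_det_transpose_mul_mul hX hP
  have hMP := isUnit_det_transpose_mul_mul hMt hP
  constructor
  · rw [one_div, le_inv_mul_iff₀ hc₁]
    calc c₁ * _ ≤ c₁ * (((1 - orthProj Mt P) *ᵥ v) ⬝ᵥ X *ᵥ ((1 - orthProj Mt P) *ᵥ v)) :=
          mul_le_mul_of_nonneg_left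
            (one_sub_orthProj_dotProduct_le_of_orthProj hX.posSemidef hXP Mt v) hc₁.le
      _ ≤ _ := (hequiv _).1
  · calc _ ≤ ((1 - orthProj X P) *ᵥ v) ⬝ᵥ Mt *ᵥ ((1 - orthProj X P) *ᵥ v) :=
          one_sub_orthProj_dotProduct_le_of_orthProj hMt.posSemidef hMP X v
      _ ≤ _ := (hequiv _).2

theorem projection_spectral_equivalence {n nc : ℕ}
    (X Mt : Matrix (Fin n) (Fin n) ℝ) (hX : X.PosDef) (hMt : Mt.PosDef)
    (c₁ c₂ : ℝ) (hc₁ : 0 < c₁) (hc₁₂ : c₁ ≤ c₂)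
    (hequiv : ∀ v : Fin n → ℝ,
      c₁ * (v ⬝ᵥ X.mulVec v) ≤ v ⬝ᵥ Mt.mulVec v ∧
        v ⬝ᵥ Mt.mulVec v ≤ c₂ * (v ⬝ᵥ X.mulVec v))
    (P : Matrix (Fin n) (Fin nc) ℝ) (hP : Function.Injective P.mulVec)
    (piX piM : Matrix (Fin n) (Fin n) ℝ)
    (hpiX : piX = P * (Pᵀ * X * P)⁻¹ * Pᵀ * X)
    (hpiM : piM = P * (Pᵀ * Mt * P)⁻¹ * Pᵀ * Mt) :
    ∀ v : Fin n → ℝ,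
      ((1 - piX).mulVec v) ⬝ᵥ X.mulVec ((1 - piX).mulVec v)
          ≤ (1 / c₁) * (((1 - piM).mulVec v) ⬝ᵥ Mt.mulVec ((1 - piM).mulVec v)) ∧
      ((1 - piM).mulVec v) ⬝ᵥ Mt.mulVec ((1 - piM).mulVec v)
          ≤ c₂ * (((1 - piX).mulVec v) ⬝ᵥ X.mulVec ((1 - piX).mulVec v)) :=
  projection_spectral_equivalence_general X Mt hX hMt c₁ c₂ hc₁ hequiv P hP piX piM hpiX hpiM
end

section
/- Let A be SPD, M̃ SPD with M̃ − A positive semidefinite, and let 0 < λ₁ ≤ ... ≤ λ_n ≤ 1 be the eigenvalues of the generalized eigenproblem A v = λ M̃ v with M̃-orthonormal eigenvectors v₁,...,v_n. For n_c < n, let P_opt = [v₁ ... v_{n_c}]. Then K_TG := max_{v≠0} ‖(I − π_{M̃})v‖_{M̃}² / ‖v‖_A² with π_{M̃} the M̃-orthogonal projection onto range(P_opt) equals 1/λ_{n_c+1}, and this is the minimum of K over all full-rank P with n_c columns. -/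
/-!
In the coordinates `cᵢ = vᵢᵀ M̃ w` of the `M̃`-orthonormal eigenbasis, `‖w‖²_M̃ = ∑ cᵢ²` and
`‖w‖²_A = ∑ λᵢ cᵢ²`. For `P_opt`, the correction `I - π_M̃` deletes the first `n_c` coordinates
and does not increase `‖·‖_A`, so `‖(I - π_M̃) w‖²_M̃ ≤ ‖w‖²_A / λ_{n_c+1}`. Conversely, for any
full-rank `P` with `n_c` columns a dimension count gives a nonzero `w ∈ span(v₁, …, v_{n_c+1})`
that is `M̃`-orthogonal to `range P`; then `(I - π_M̃) w = w` and
`‖w‖²_M̃ / ‖w‖²_A ≥ 1 / λ_{n_c+1}`. Applied to `P_opt` this also gives the matching lower bound.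
-/

open Matrix

/-- The sharp two-grid constant `K_TG(P) = max_v ‖(I - π_M̃)v‖_M̃² / ‖v‖_A²`. -/
noncomputable def Kconst {n nc : ℕ} (A Mt : Matrix (Fin n) (Fin n) ℝ)
    (P : Matrix (Fin n) (Fin nc) ℝ) : ℝ :=
  ⨆ v : {v : Fin n → ℝ // v ≠ 0},
    (((1 - P * (Pᵀ * Mt * P)⁻¹ * Pᵀ * Mt).mulVec v) ⬝ᵥ
        Mt.mulVec ((1 - P * (Pᵀ * Mt * P)⁻¹ * Pᵀ * Mt).mulVec v)) /
      (v ⬝ᵥ A.mulVec v)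

lemma Matrix.exists_ne_zero_mulVec_eq_zero_of_lt {m k : ℕ} (B : Matrix (Fin m) (Fin k) ℝ)
    (h : m < k) : ∃ d ≠ 0, B *ᵥ d = 0 := by
  have hker : LinearMap.ker B.mulVecLin ≠ ⊥ :=
    LinearMap.ker_ne_bot_of_finrank_lt (by simpa using h)
  obtain ⟨d, hd, hne⟩ := (Submodule.ne_bot_iff _).mp hker
  exact ⟨d, hne, hd⟩

lemma dotProduct_mulVec_mulVec_eq_sum_of_transpose_mul_mul_eq_diagonal {n : ℕ} {ι : Type*}
    [Fintype ι] [DecidableEq ι] {V : Matrix (Fin n) ι ℝ} {B : Matrix (Fin n) (Fin n) ℝ}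
    {μ : ι → ℝ} (h : Vᵀ * B * V = diagonal μ) (c : ι → ℝ) :
    V *ᵥ c ⬝ᵥ B *ᵥ (V *ᵥ c) = ∑ i, μ i * c i ^ 2 := by
  rw [dotProduct_comm, ← dotProduct_transpose_mulVec, mulVec_mulVec, mulVec_mulVec, h]
  simp only [dotProduct, mulVec_diagonal, sq]
  exact Finset.sum_congr rfl fun i _ => by ring

section Projection

variable {n m : ℕ} (Mt : Matrix (Fin n) (Fin n) ℝ) (P : Matrix (Fin n) (Fin m) ℝ)

/-- `I - π_M̃`, where `π_M̃` is the `M̃`-orthogonal projection onto the range of `P`. -/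
noncomputable def projCompl : Matrix (Fin n) (Fin n) ℝ :=
  1 - P * (Pᵀ * Mt * P)⁻¹ * Pᵀ * Mt

lemma projCompl_mulVec_of_mulVec_eq_zero {w : Fin n → ℝ} (h : (Pᵀ * Mt) *ᵥ w = 0) :
    projCompl Mt P *ᵥ w = w := by
  rw [projCompl, sub_mulVec, one_mulVec, Matrix.mul_assoc (P * _), ← mulVec_mulVec, h,
    mulVec_zero, sub_zero]

lemma transpose_mul_mul_projCompl (hP : IsUnit (Pᵀ * Mt * P)) :
    Pᵀ * Mt * projCompl Mt P = 0 := by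
  have hinv := mul_nonsing_inv _ ((isUnit_iff_isUnit_det _).mp hP)
  rw [projCompl, Matrix.mul_sub, Matrix.mul_one, sub_eq_zero]
  calc Pᵀ * Mt = (Pᵀ * Mt * P) * (Pᵀ * Mt * P)⁻¹ * (Pᵀ * Mt) := by rw [hinv, Matrix.one_mul]
    _ = Pᵀ * Mt * (P * (Pᵀ * Mt * P)⁻¹ * Pᵀ * Mt) := by simp only [Matrix.mul_assoc]

lemma projCompl_eq_of_gram_eq_one (h : Pᵀ * Mt * P = 1) :
    projCompl Mt P = 1 - P * (Pᵀ * Mt) := by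
  rw [projCompl, h, inv_one, Matrix.mul_one, Matrix.mul_assoc]

lemma projCompl_dotProduct_mulVec_le (hMt : Mt.PosDef) (hP : Function.Injective P.mulVec)
    (w : Fin n → ℝ) :
    projCompl Mt P *ᵥ w ⬝ᵥ Mt *ᵥ (projCompl Mt P *ᵥ w) ≤ w ⬝ᵥ Mt *ᵥ w := by
  have hMtT : Mtᵀ = Mt := hMt.isHermitian
  have hgram : (Pᵀ * Mt * P).PosDef := by
    simpa [conjTranspose_eq_transpose_of_trivial] using hMt.conjTranspose_mul_mul_same hP
  set u := projCompl Mt P *ᵥ w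
  set z := ((Pᵀ * Mt * P)⁻¹ * Pᵀ * Mt) *ᵥ w
  have hw : w = u + P *ᵥ z := by
    rw [mulVec_mulVec, show u = projCompl Mt P *ᵥ w from rfl, projCompl, sub_mulVec, one_mulVec,
      ← Matrix.mul_assoc, ← Matrix.mul_assoc, sub_add_cancel]
  have hcross : P *ᵥ z ⬝ᵥ Mt *ᵥ u = 0 := by
    rw [dotProduct_comm, ← dotProduct_transpose_mulVec, mulVec_mulVec, mulVec_mulVec,
      transpose_mul_mul_projCompl Mt P hgram.isUnit, zero_mulVec, dotProduct_zero]
  have hcross' : u ⬝ᵥ Mt *ᵥ (P *ᵥ z) = 0 := by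
    rw [← hMtT, dotProduct_transpose_mulVec]
    exact hcross
  have hnonneg : 0 ≤ P *ᵥ z ⬝ᵥ Mt *ᵥ (P *ᵥ z) := by
    simpa using hMt.posSemidef.dotProduct_mulVec_nonneg (P *ᵥ z)
  conv_rhs => rw [hw]
  rw [mulVec_add, add_dotProduct, dotProduct_add, dotProduct_add, hcross, hcross']
  linarith

end Projection

section TwoGrid

variable {n m : ℕ} (A Mt : Matrix (Fin n) (Fin n) ℝ) (P : Matrix (Fin n) (Fin m) ℝ)

noncomputable def tgRatio (w : Fin n → ℝ) : ℝ :=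
  (projCompl Mt P *ᵥ w ⬝ᵥ Mt *ᵥ (projCompl Mt P *ᵥ w)) / (w ⬝ᵥ A *ᵥ w)

variable {A Mt P} {K : ℝ}

lemma Kconst_le (hn : 0 < n) (h : ∀ w, w ≠ 0 → tgRatio A Mt P w ≤ K) : Kconst A Mt P ≤ K := by
  have : Nonempty {w : Fin n → ℝ // w ≠ 0} :=
    ⟨⟨Pi.single ⟨0, hn⟩ 1, by simp⟩⟩
  exact ciSup_le fun w => h w.1 w.2

lemma tgRatio_le_Kconst (hbdd : ∀ w, w ≠ 0 → tgRatio A Mt P w ≤ K) {w : Fin n → ℝ}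
    (hw : w ≠ 0) : tgRatio A Mt P w ≤ Kconst A Mt P :=
  le_ciSup (f := fun w : {w : Fin n → ℝ // w ≠ 0} => tgRatio A Mt P w)
    ⟨K, by rintro _ ⟨w, rfl⟩; exact hbdd w.1 w.2⟩ ⟨w, hw⟩

end TwoGrid

section GeneralizedEigenbasis

variable {n : ℕ} {A Mt : Matrix (Fin n) (Fin n) ℝ} {lam : Fin n → ℝ} {v : Fin n → Fin n → ℝ}
  {ι : Type*}

def eigCols (v : Fin n → Fin n → ℝ) (e : ι → Fin n) : Matrix (Fin n) ι ℝ :=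
  of fun i j => v (e j) i

def eigCoord (Mt : Matrix (Fin n) (Fin n) ℝ) (v : Fin n → Fin n → ℝ) (w : Fin n → ℝ) :
    Fin n → ℝ :=
  fun i => v i ⬝ᵥ Mt *ᵥ w

lemma eigCoord_sub (w y : Fin n → ℝ) (i : Fin n) :
    eigCoord Mt v (w - y) i = eigCoord Mt v w i - eigCoord Mt v y i := by
  simp only [eigCoord, mulVec_sub, dotProduct_sub]

lemma transpose_eigCols_mul_mul_eigCols [Fintype ι] {κ : Type*} [Fintype κ]
    (B : Matrix (Fin n) (Fin n) ℝ) (e : ι → Fin n) (f : κ → Fin n) :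
    (eigCols v e)ᵀ * B * eigCols v f = of fun j l => v (e j) ⬝ᵥ B *ᵥ v (f l) := by
  ext j l
  rw [Matrix.mul_assoc]
  simp [eigCols, Matrix.mul_apply, dotProduct, mulVec]

lemma transpose_eigCols_mul_mulVec [Fintype ι] (e : ι → Fin n) (w : Fin n → ℝ) :
    ((eigCols v e)ᵀ * Mt) *ᵥ w = fun j => eigCoord Mt v w (e j) := by
  ext j
  rw [← mulVec_mulVec]
  simp [eigCols, eigCoord, dotProduct, mulVec]

variable [Fintype ι] (horth : ∀ i j, v i ⬝ᵥ Mt *ᵥ v j = if i = j then 1 else 0)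
include horth

lemma eigCols_gram [DecidableEq ι] {e : ι → Fin n} (he : Function.Injective e) :
    (eigCols v e)ᵀ * Mt * eigCols v e = 1 := by
  rw [transpose_eigCols_mul_mul_eigCols]
  ext j l
  simp [horth, one_apply, he.eq_iff]

lemma eigCols_mulVec_injective [DecidableEq ι] {e : ι → Fin n} (he : Function.Injective e) :
    Function.Injective (eigCols v e).mulVec := fun c d h => by
  simpa [mulVec_mulVec, eigCols_gram horth he] using congrArg ((eigCols v e)ᵀ * Mt).mulVec h

lemma eigCols_mulVec_eigCoord (w : Fin n → ℝ) : eigCols v id *ᵥ eigCoord Mt v w = w := by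
  have h : eigCols v id * ((eigCols v id)ᵀ * Mt) = 1 :=
    mul_eq_one_comm.mp (eigCols_gram horth Function.injective_id)
  calc eigCols v id *ᵥ eigCoord Mt v w
      = eigCols v id *ᵥ (((eigCols v id)ᵀ * Mt) *ᵥ w) := by rw [transpose_eigCols_mul_mulVec]; rfl
    _ = w := by rw [mulVec_mulVec, h, one_mulVec]

lemma eigCoord_eigCols_mulVec (e : ι → Fin n) (d : ι → ℝ) (i : Fin n) :
    eigCoord Mt v (eigCols v e *ᵥ d) i = ∑ j, if i = e j then d j else 0 := by
  have h := congrFun (transpose_eigCols_mul_mulVec (Mt := Mt) (v := v) id (eigCols v e *ᵥ d)) i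
  rw [mulVec_mulVec, transpose_eigCols_mul_mul_eigCols, id] at h
  rw [← h]
  simp_rw [horth]
  simp [mulVec, dotProduct]

lemma eigCoord_eigCols_mulVec_apply [DecidableEq ι] {e : ι → Fin n} (he : Function.Injective e)
    (d : ι → ℝ) (j : ι) : eigCoord Mt v (eigCols v e *ᵥ d) (e j) = d j := by
  simp [eigCoord_eigCols_mulVec horth, he.eq_iff]

lemma eigCoord_eigCols_mulVec_of_notMem {e : ι → Fin n} (d : ι → ℝ) {i : Fin n}
    (hi : i ∉ Set.range e) : eigCoord Mt v (eigCols v e *ᵥ d) i = 0 := by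
  rw [eigCoord_eigCols_mulVec horth]
  exact Finset.sum_eq_zero fun j _ => if_neg fun h => hi ⟨j, h.symm⟩

lemma eigCoord_projCompl_eigCols {m : ℕ} {e : Fin m → Fin n} (he : Function.Injective e)
    (w : Fin n → ℝ) (i : Fin n) :
    eigCoord Mt v (projCompl Mt (eigCols v e) *ᵥ w) i =
      if i ∈ Set.range e then 0 else eigCoord Mt v w i := by
  rw [projCompl_eq_of_gram_eq_one _ _ (eigCols_gram horth he), sub_mulVec, one_mulVec,
    ← mulVec_mulVec, transpose_eigCols_mul_mulVec, eigCoord_sub]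
  split_ifs with hi
  · obtain ⟨j, rfl⟩ := hi
    rw [eigCoord_eigCols_mulVec_apply horth he, sub_self]
  · rw [eigCoord_eigCols_mulVec_of_notMem horth _ hi, sub_zero]

lemma dotProduct_mulVec_eq_sum_eigCoord_sq (w : Fin n → ℝ) :
    w ⬝ᵥ Mt *ᵥ w = ∑ i, eigCoord Mt v w i ^ 2 := by
  have hgram : (eigCols v id)ᵀ * Mt * eigCols v id = diagonal fun _ => 1 := by
    rw [eigCols_gram horth Function.injective_id, diagonal_one]
  conv_lhs => rw [← eigCols_mulVec_eigCoord horth w]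
  simpa using dotProduct_mulVec_mulVec_eq_sum_of_transpose_mul_mul_eq_diagonal hgram _

lemma exists_ne_zero_orthogonal_eigCoord_le {m : ℕ} (hm : m < n) (P : Matrix (Fin n) (Fin m) ℝ) :
    ∃ w ≠ 0, (Pᵀ * Mt) *ᵥ w = 0 ∧ ∀ i, eigCoord Mt v w i ≠ 0 → i ≤ ⟨m, hm⟩ := by
  have he : Function.Injective (Fin.castLE hm : Fin (m + 1) → Fin n) := Fin.castLE_injective _
  obtain ⟨d, hd, hPd⟩ := (Pᵀ * Mt * eigCols v (Fin.castLE hm)).exists_ne_zero_mulVec_eq_zero_of_lt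
    (Nat.lt_succ_self m)
  refine ⟨eigCols v (Fin.castLE hm) *ᵥ d, ?_, by rwa [mulVec_mulVec], fun i hi => ?_⟩
  · exact fun h => hd (eigCols_mulVec_injective horth he (h.trans (mulVec_zero _).symm))
  · by_contra hlt
    refine hi (eigCoord_eigCols_mulVec_of_notMem horth d ?_)
    rintro ⟨j, rfl⟩
    exact hlt (Fin.mk_le_mk.mpr (Nat.lt_succ_iff.mp j.isLt))

variable (heig : ∀ i, A *ᵥ v i = lam i • Mt *ᵥ v i)
include heig

lemma dotProduct_mulVec_eq_sum_lam_mul_eigCoord_sq (w : Fin n → ℝ) :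
    w ⬝ᵥ A *ᵥ w = ∑ i, lam i * eigCoord Mt v w i ^ 2 := by
  have hgram : (eigCols v id)ᵀ * A * eigCols v id = diagonal lam := by
    rw [transpose_eigCols_mul_mul_eigCols]
    ext j l
    by_cases hjl : j = l <;> simp [heig, horth, hjl]
  conv_lhs => rw [← eigCols_mulVec_eigCoord horth w]
  exact dotProduct_mulVec_mulVec_eq_sum_of_transpose_mul_mul_eq_diagonal hgram _

lemma mul_dotProduct_mulVec_le_of_eigCoord {μ : ℝ} {w : Fin n → ℝ}
    (h : ∀ i, eigCoord Mt v w i ≠ 0 → μ ≤ lam i) : μ * (w ⬝ᵥ Mt *ᵥ w) ≤ w ⬝ᵥ A *ᵥ w := by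
  rw [dotProduct_mulVec_eq_sum_eigCoord_sq horth,
    dotProduct_mulVec_eq_sum_lam_mul_eigCoord_sq horth heig, Finset.mul_sum]
  refine Finset.sum_le_sum fun i _ => ?_
  by_cases hi : eigCoord Mt v w i = 0
  · simp [hi]
  · exact mul_le_mul_of_nonneg_right (h i hi) (sq_nonneg _)

lemma dotProduct_mulVec_le_mul_of_eigCoord {μ : ℝ} {w : Fin n → ℝ}
    (h : ∀ i, eigCoord Mt v w i ≠ 0 → lam i ≤ μ) : w ⬝ᵥ A *ᵥ w ≤ μ * (w ⬝ᵥ Mt *ᵥ w) := by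
  rw [dotProduct_mulVec_eq_sum_eigCoord_sq horth,
    dotProduct_mulVec_eq_sum_lam_mul_eigCoord_sq horth heig, Finset.mul_sum]
  refine Finset.sum_le_sum fun i _ => ?_
  by_cases hi : eigCoord Mt v w i = 0
  · simp [hi]
  · exact mul_le_mul_of_nonneg_right (h i hi) (sq_nonneg _)

lemma dotProduct_mulVec_pos_of_eigenvalues_pos (hpos : ∀ i, 0 < lam i) {w : Fin n → ℝ}
    (hw : w ≠ 0) : 0 < w ⬝ᵥ A *ᵥ w := by
  obtain ⟨i, hi⟩ : ∃ i, eigCoord Mt v w i ≠ 0 := by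
    by_contra! h
    rw [← eigCols_mulVec_eigCoord horth w, show eigCoord Mt v w = 0 from funext h,
      mulVec_zero] at hw
    exact hw rfl
  rw [dotProduct_mulVec_eq_sum_lam_mul_eigCoord_sq horth heig]
  exact Finset.sum_pos' (fun j _ => mul_nonneg (hpos j).le (sq_nonneg _))
    ⟨i, Finset.mem_univ _, mul_pos (hpos i) (by positivity)⟩

lemma dotProduct_mulVec_projCompl_eigCols_le {m : ℕ} (hnonneg : ∀ i, 0 ≤ lam i)
    {e : Fin m → Fin n} (he : Function.Injective e) (w : Fin n → ℝ) :
    projCompl Mt (eigCols v e) *ᵥ w ⬝ᵥ A *ᵥ (projCompl Mt (eigCols v e) *ᵥ w) ≤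
      w ⬝ᵥ A *ᵥ w := by
  rw [dotProduct_mulVec_eq_sum_lam_mul_eigCoord_sq horth heig,
    dotProduct_mulVec_eq_sum_lam_mul_eigCoord_sq horth heig w]
  refine Finset.sum_le_sum fun i _ => ?_
  rw [eigCoord_projCompl_eigCols horth he]
  split_ifs
  · simpa using mul_nonneg (hnonneg i) (sq_nonneg (eigCoord Mt v w i))
  · rfl

end GeneralizedEigenbasis

section OptimalInterpolation

variable {n m : ℕ} {A Mt : Matrix (Fin n) (Fin n) ℝ} {lam : Fin n → ℝ} {v : Fin n → Fin n → ℝ}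
  (horth : ∀ i j, v i ⬝ᵥ Mt *ᵥ v j = if i = j then 1 else 0)
  (heig : ∀ i, A *ᵥ v i = lam i • Mt *ᵥ v i)
include horth heig

lemma tgRatio_le_one_div (hMt : Mt.PosDef) {P : Matrix (Fin n) (Fin m) ℝ}
    (hP : Function.Injective P.mulVec) {μ : ℝ} (hμ : 0 < μ) (hlam : ∀ i, μ ≤ lam i)
    {w : Fin n → ℝ} (hw : w ≠ 0) : tgRatio A Mt P w ≤ 1 / μ := by
  have hMw : 0 < w ⬝ᵥ Mt *ᵥ w := by simpa using hMt.dotProduct_mulVec_pos hw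
  have hAw : μ * (w ⬝ᵥ Mt *ᵥ w) ≤ w ⬝ᵥ A *ᵥ w :=
    mul_dotProduct_mulVec_le_of_eigCoord horth heig fun i _ => hlam i
  have hproj := projCompl_dotProduct_mulVec_le Mt P hMt hP w
  rw [tgRatio, div_le_div_iff₀ ((mul_pos hμ hMw).trans_le hAw) hμ]
  nlinarith

lemma one_div_lam_le_Kconst (hMt : Mt.PosDef) (hmono : Monotone lam) (hpos : ∀ i, 0 < lam i)
    (hm : m < n) {P : Matrix (Fin n) (Fin m) ℝ} (hP : Function.Injective P.mulVec) :
    1 / lam ⟨m, hm⟩ ≤ Kconst A Mt P := by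
  obtain ⟨w, hw, hPw, hsupp⟩ := exists_ne_zero_orthogonal_eigCoord_le horth hm P
  have hAw : w ⬝ᵥ A *ᵥ w ≤ lam ⟨m, hm⟩ * (w ⬝ᵥ Mt *ᵥ w) :=
    dotProduct_mulVec_le_mul_of_eigCoord horth heig fun i hi => hmono (hsupp i hi)
  have hbdd : ∀ w, w ≠ 0 → tgRatio A Mt P w ≤ 1 / lam ⟨0, by omega⟩ := fun w hw =>
    tgRatio_le_one_div horth heig hMt hP (hpos _) (fun i => hmono (Nat.zero_le i)) hw
  calc 1 / lam ⟨m, hm⟩ ≤ (w ⬝ᵥ Mt *ᵥ w) / (w ⬝ᵥ A *ᵥ w) := by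
        rw [div_le_div_iff₀ (hpos _)
          (dotProduct_mulVec_pos_of_eigenvalues_pos horth heig hpos hw)]
        linarith
    _ = tgRatio A Mt P w := by rw [tgRatio, projCompl_mulVec_of_mulVec_eq_zero Mt P hPw]
    _ ≤ Kconst A Mt P := tgRatio_le_Kconst hbdd hw

lemma Kconst_eigCols_castLE_le (hmono : Monotone lam) (hpos : ∀ i, 0 < lam i) (hm : m < n) :
    Kconst A Mt (eigCols v (Fin.castLE hm.le)) ≤ 1 / lam ⟨m, hm⟩ := by
  refine Kconst_le (by omega) fun w hw => ?_
  set u := projCompl Mt (eigCols v (Fin.castLE hm.le)) *ᵥ w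
  have he : Function.Injective (Fin.castLE hm.le) := Fin.castLE_injective _
  have hu : lam ⟨m, hm⟩ * (u ⬝ᵥ Mt *ᵥ u) ≤ u ⬝ᵥ A *ᵥ u := by
    refine mul_dotProduct_mulVec_le_of_eigCoord horth heig fun i hi => hmono ?_
    rw [eigCoord_projCompl_eigCols horth he] at hi
    by_contra hlt
    exact hi (if_pos ⟨⟨i, not_le.mp hlt⟩, rfl⟩)
  have hAu : u ⬝ᵥ A *ᵥ u ≤ w ⬝ᵥ A *ᵥ w :=
    dotProduct_mulVec_projCompl_eigCols_le horth heig (fun i => (hpos i).le) he w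
  rw [tgRatio, div_le_div_iff₀ (dotProduct_mulVec_pos_of_eigenvalues_pos horth heig hpos hw)
    (hpos _)]
  linarith

end OptimalInterpolation

theorem optimal_interpolation_general {n nc : ℕ} (hnc : nc < n)
    (A Mt : Matrix (Fin n) (Fin n) ℝ) (hMt : Mt.PosDef)
    (lam : Fin n → ℝ) (v : Fin n → (Fin n → ℝ))
    (hmono : Monotone lam) (hpos : ∀ i, 0 < lam i)
    (heig : ∀ i, A.mulVec (v i) = lam i • Mt.mulVec (v i))
    (horth : ∀ i j, (v i) ⬝ᵥ Mt.mulVec (v j) = if i = j then 1 else 0) :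
    Kconst A Mt (Matrix.of fun i (j : Fin nc) => v (Fin.castLE hnc.le j) i)
        = 1 / lam ⟨nc, hnc⟩ ∧
      ∀ P : Matrix (Fin n) (Fin nc) ℝ, Function.Injective P.mulVec →
        Kconst A Mt (Matrix.of fun i (j : Fin nc) => v (Fin.castLE hnc.le j) i)
          ≤ Kconst A Mt P := by
  have hupper : Kconst A Mt (eigCols v (Fin.castLE hnc.le)) ≤ 1 / lam ⟨nc, hnc⟩ :=
    Kconst_eigCols_castLE_le horth heig hmono hpos hnc
  have hlower := fun P (hP : Function.Injective (Matrix.mulVec P)) =>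
    one_div_lam_le_Kconst horth heig hMt hmono hpos hnc hP
  have hP₀ := eigCols_mulVec_injective horth (Fin.castLE_injective hnc.le)
  exact ⟨hupper.antisymm (hlower _ hP₀), fun P hP => hupper.trans (hlower P hP)⟩

theorem optimal_interpolation {n nc : ℕ} (hnc : nc < n)
    (A Mt : Matrix (Fin n) (Fin n) ℝ) (hA : A.PosDef) (hMt : Mt.PosDef)
    (hMtA : (Mt - A).PosSemidef)
    (lam : Fin n → ℝ) (v : Fin n → (Fin n → ℝ))
    (hmono : Monotone lam) (hpos : ∀ i, 0 < lam i) (hle1 : ∀ i, lam i ≤ 1)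
    (heig : ∀ i, A.mulVec (v i) = lam i • Mt.mulVec (v i))
    (horth : ∀ i j, (v i) ⬝ᵥ Mt.mulVec (v j) = if i = j then 1 else 0) :
    Kconst A Mt (Matrix.of fun i (j : Fin nc) => v (Fin.castLE hnc.le j) i)
        = 1 / lam ⟨nc, hnc⟩ ∧
      ∀ P : Matrix (Fin n) (Fin nc) ℝ, Function.Injective P.mulVec →
        Kconst A Mt (Matrix.of fun i (j : Fin nc) => v (Fin.castLE hnc.le j) i)
          ≤ Kconst A Mt P :=
  optimal_interpolation_general hnc A Mt hMt lam v hmono hpos heig horth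
end

section
/- Let A^{(k)} be SPD matrices, P^{(k)} full column rank with A^{(k+1)} = (P^{(k)})ᵀ A^{(k)} P^{(k)}, and let Q_k = P^{(k)}((P^{(k)})ᵀP^{(k)})⁻¹(P^{(k)})ᵀ be the ℓ²-orthogonal projection onto range(P^{(k)}). If ‖(I − Q_k)v‖² ≤ (β/‖A^{(k)}‖₂²)‖A^{(k)}v‖² for all v, then for every v there exists v_c (namely v_c = ((P^{(k)})ᵀP^{(k)})⁻¹(P^{(k)})ᵀv) such that ‖v − P^{(k)}v_c‖²_{A^{(k)}} ≤ (β/‖A^{(k)}‖₂)‖A^{(k)}v‖². -/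
open Matrix

/-!
With `Q = P (PᵀP)⁻¹ Pᵀ` and `v_c = (PᵀP)⁻¹ Pᵀ v`, the coarse-grid error is `v - P v_c = (I - Q) v`.
Writing `N` for the ℓ²-operator norm of `A`, Cauchy–Schwarz gives `wᵀ A w ≤ ‖w‖ ‖A w‖ ≤ N ‖w‖²`,
and the hypothesis bounds `N ‖(I - Q) v‖²` by `(β / N) ‖A v‖²`.
-/

open scoped Matrix.Norms.L2Operator

theorem anorm_one_eq_norm {n : ℕ} (u : Fin n → ℝ) : anorm 1 u = ‖WithLp.toLp 2 u‖ := by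
  rw [anorm, one_mulVec, EuclideanSpace.norm_eq]
  simp [dotProduct, sq]

theorem dotProduct_eq_inner {n : ℕ} (u u' : Fin n → ℝ) :
    u ⬝ᵥ u' = inner ℝ (WithLp.toLp 2 u) (WithLp.toLp 2 u') := by
  simp [dotProduct, PiLp.inner_apply, mul_comm]

theorem opNormA_one_nonneg {n : ℕ} (A : Matrix (Fin n) (Fin n) ℝ) : 0 ≤ opNormA 1 A :=
  Real.iSup_nonneg fun _ => div_nonneg (Real.sqrt_nonneg _) (Real.sqrt_nonneg _)

theorem anorm_one_mulVec_le {n : ℕ} (A : Matrix (Fin n) (Fin n) ℝ) (w : Fin n → ℝ) :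
    anorm 1 (A *ᵥ w) ≤ opNormA 1 A * anorm 1 w := by
  rcases eq_or_ne w 0 with rfl | hw
  · simp [anorm]
  have hw_pos : 0 < anorm 1 w := by simpa [anorm_one_eq_norm] using hw
  have hbdd : BddAbove (Set.range fun v : {v : Fin n → ℝ // v ≠ 0} =>
      anorm 1 (A *ᵥ (v : Fin n → ℝ)) / anorm 1 (v : Fin n → ℝ)) := by
    refine ⟨‖A‖, ?_⟩
    rintro _ ⟨⟨v, hv⟩, rfl⟩
    have hv_pos : 0 < anorm 1 v := by simpa [anorm_one_eq_norm] using hv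
    rw [div_le_iff₀ hv_pos, anorm_one_eq_norm, anorm_one_eq_norm]
    exact A.l2_opNorm_mulVec (WithLp.toLp 2 v)
  exact (div_le_iff₀ hw_pos).mp (le_ciSup hbdd ⟨w, hw⟩)

theorem dotProduct_mulVec_le_opNormA_one {n : ℕ} (A : Matrix (Fin n) (Fin n) ℝ)
    (w : Fin n → ℝ) : w ⬝ᵥ A *ᵥ w ≤ opNormA 1 A * (w ⬝ᵥ w) := by
  have hw_sq : w ⬝ᵥ w = anorm 1 w * anorm 1 w := by
    rw [anorm_one_eq_norm, dotProduct_eq_inner, real_inner_self_eq_norm_mul_norm]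
  calc w ⬝ᵥ A *ᵥ w ≤ anorm 1 w * anorm 1 (A *ᵥ w) := by
        rw [dotProduct_eq_inner, anorm_one_eq_norm, anorm_one_eq_norm]
        exact real_inner_le_norm _ _
    _ ≤ anorm 1 w * (opNormA 1 A * anorm 1 w) :=
        mul_le_mul_of_nonneg_left (anorm_one_mulVec_le A w) (Real.sqrt_nonneg _)
    _ = opNormA 1 A * (w ⬝ᵥ w) := by rw [hw_sq]; ring

theorem wapA2_implies_sap_general {n nc : ℕ}
    (A : Matrix (Fin n) (Fin n) ℝ)
    (P : Matrix (Fin n) (Fin nc) ℝ)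
    (β : ℝ)
    (hwap : ∀ v : Fin n → ℝ,
      (((1 - P * (Pᵀ * P)⁻¹ * Pᵀ).mulVec v) ⬝ᵥ ((1 - P * (Pᵀ * P)⁻¹ * Pᵀ).mulVec v))
        ≤ (β / (opNormA (1 : Matrix (Fin n) (Fin n) ℝ) A) ^ 2) *
            ((A.mulVec v) ⬝ᵥ (A.mulVec v))) :
    ∀ v : Fin n → ℝ, ∃ vc : Fin nc → ℝ,
      vc = ((Pᵀ * P)⁻¹ * Pᵀ).mulVec v ∧
      (v - P.mulVec vc) ⬝ᵥ A.mulVec (v - P.mulVec vc)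
        ≤ (β / opNormA (1 : Matrix (Fin n) (Fin n) ℝ) A) *
            ((A.mulVec v) ⬝ᵥ (A.mulVec v)) := by
  intro v
  refine ⟨_, rfl, ?_⟩
  have hv_sub : v - P *ᵥ ((Pᵀ * P)⁻¹ * Pᵀ) *ᵥ v = (1 - P * (Pᵀ * P)⁻¹ * Pᵀ) *ᵥ v := by
    rw [sub_mulVec, one_mulVec, mulVec_mulVec, Matrix.mul_assoc]
  rw [hv_sub]
  set N := opNormA 1 A
  set w := (1 - P * (Pᵀ * P)⁻¹ * Pᵀ) *ᵥ v
  calc w ⬝ᵥ A *ᵥ w ≤ N * (w ⬝ᵥ w) := dotProduct_mulVec_le_opNormA_one A w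
    _ ≤ N * (β / N ^ 2 * (A *ᵥ v ⬝ᵥ A *ᵥ v)) :=
        mul_le_mul_of_nonneg_left (hwap v) (opNormA_one_nonneg A)
    -- also when `N = 0`, where both sides are `0` since `x / 0 = 0`
    _ = β / N * (A *ᵥ v ⬝ᵥ A *ᵥ v) := by grind

theorem wapA2_implies_sap {n nc : ℕ}
    (A : Matrix (Fin n) (Fin n) ℝ) (hA : A.PosDef)
    (P : Matrix (Fin n) (Fin nc) ℝ) (hP : Function.Injective P.mulVec)
    (β : ℝ)
    (hwap : ∀ v : Fin n → ℝ,
      (((1 - P * (Pᵀ * P)⁻¹ * Pᵀ).mulVec v) ⬝ᵥ ((1 - P * (Pᵀ * P)⁻¹ * Pᵀ).mulVec v))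
        ≤ (β / (opNormA (1 : Matrix (Fin n) (Fin n) ℝ) A) ^ 2) *
            ((A.mulVec v) ⬝ᵥ (A.mulVec v))) :
    ∀ v : Fin n → ℝ, ∃ vc : Fin nc → ℝ,
      vc = ((Pᵀ * P)⁻¹ * Pᵀ).mulVec v ∧
      (v - P.mulVec vc) ⬝ᵥ A.mulVec (v - P.mulVec vc)
        ≤ (β / opNormA (1 : Matrix (Fin n) (Fin n) ℝ) A) *
            ((A.mulVec v) ⬝ᵥ (A.mulVec v)) :=
  wapA2_implies_sap_general A P β hwap
end

section
/- Let A be SPD, M invertible with M + Mᵀ − A SPD, P full column rank, and π_A the A-orthogonal projection onto range(P). Then ‖(I − M⁻ᵀA)(I − π_A)(I − M⁻¹A)‖_A = ‖(I − π_A)(I − M⁻¹A)‖_A² = ‖(I − M⁻ᵀA)(I − π_A)‖_A². -/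
/-!
Factor `A = Sᵀ S` with `S` invertible (e.g. `S = √A`). Then `‖B‖_A` is the spectral norm of
`S B S⁻¹`, and an `A`-adjoint pair `Eᵀ A = A F` becomes a genuine adjoint pair
`(S E S⁻¹)ᴴ = S F S⁻¹`. For `E = (I - π_A)(I - M⁻¹A)` and `F = (I - M⁻ᵀA)(I - π_A)`,
idempotence of `I - π_A` rewrites the symmetrized two-grid operator as `F E`, so with
`K = S E S⁻¹` the identities are the C⋆-identities `‖Kᴴ K‖ = ‖K‖² = ‖Kᴴ‖²`.
-/

open Matrix

open scoped Matrix.Norms.L2Operator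

theorem ContinuousLinearMap.iSup_norm_apply_div_norm {𝕜 E F : Type*}
    [NontriviallyNormedField 𝕜] [NormedAddCommGroup E] [NormedSpace 𝕜 E]
    [SeminormedAddCommGroup F] [NormedSpace 𝕜 F] (f : E →L[𝕜] F) :
    ⨆ x : {x : E // x ≠ 0}, ‖f x‖ / ‖(x : E)‖ = ‖f‖ := by
  have hbdd : BddAbove (Set.range fun x : {x : E // x ≠ 0} => ‖f x‖ / ‖(x : E)‖) :=
    ⟨‖f‖, Set.forall_mem_range.2 fun x => f.ratio_le_opNorm x⟩
  refine le_antisymm (Real.iSup_le (fun x => f.ratio_le_opNorm x) (norm_nonneg f)) ?_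
  refine f.opNorm_le_bound (Real.iSup_nonneg fun _ => by positivity) fun x => ?_
  rcases eq_or_ne x 0 with rfl | hx
  · simp
  · rw [← div_le_iff₀ (norm_pos_iff.2 hx)]
    exact le_ciSup hbdd ⟨x, hx⟩

namespace Matrix

section Norm

variable {m : Type*} [Fintype m] [DecidableEq m]

theorem l2_opNorm_eq_iSup {𝕜 : Type*} [RCLike 𝕜] (C : Matrix m m 𝕜) :
    ‖C‖ = ⨆ v : {v : m → 𝕜 // v ≠ 0}, ‖WithLp.toLp 2 (C *ᵥ v)‖ / ‖WithLp.toLp 2 (v : m → 𝕜)‖ := by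
  rw [cstar_norm_def, ← ContinuousLinearMap.iSup_norm_apply_div_norm]
  let e : {v : m → 𝕜 // v ≠ 0} ≃ {x : EuclideanSpace 𝕜 m // x ≠ 0} :=
    (WithLp.equiv 2 (m → 𝕜)).symm.subtypeEquiv fun v => by simp
  exact (e.iSup_comp (g := fun x : {x : EuclideanSpace 𝕜 m // x ≠ 0} =>
    ‖toEuclideanCLM (n := m) (𝕜 := 𝕜) C x‖ / ‖(x : EuclideanSpace 𝕜 m)‖)).symm

theorem PosDef.exists_transpose_mul_self_eq {A : Matrix m m ℝ} (hA : A.PosDef) :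
    ∃ S : Matrix m m ℝ, Sᵀ * S = A ∧ IsUnit S.det := by
  open scoped MatrixOrder in
  refine ⟨CFC.sqrt A, ?_, ?_⟩
  · rw [← conjTranspose_eq_transpose_of_trivial, ← star_eq_conjTranspose,
      (CFC.sqrt_nonneg A).isSelfAdjoint.star_eq]
    exact CFC.sqrt_mul_sqrt_self A hA.posSemidef.nonneg
  · rw [PosSemidef.det_sqrt hA.posSemidef, RCLike.sqrt_real, isUnit_iff_ne_zero]
    exact (Real.sqrt_pos.2 hA.det_pos).ne'

end Norm

section AAdjoint

variable {R m k : Type*} [CommRing R] [Fintype m] [Fintype k] [DecidableEq k]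

theorem transpose_mul_mul_eq_of {A X X' Y Y' : Matrix m m R} (hX : Xᵀ * A = A * X')
    (hY : Yᵀ * A = A * Y') : (X * Y)ᵀ * A = A * (Y' * X') := by
  rw [transpose_mul, mul_assoc, hX, ← mul_assoc, hY, mul_assoc]

noncomputable def aOrthogonalProj (A : Matrix m m R) (P : Matrix m k R) : Matrix m m R :=
  P * (Pᵀ * A * P)⁻¹ * Pᵀ * A

theorem transpose_aOrthogonalProj_mul {A : Matrix m m R} (hA : Aᵀ = A) (P : Matrix m k R) :
    (aOrthogonalProj A P)ᵀ * A = A * aOrthogonalProj A P := by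
  have hQ : (Pᵀ * A * P)⁻¹ᵀ = (Pᵀ * A * P)⁻¹ := by
    rw [transpose_nonsing_inv, transpose_mul, transpose_mul, transpose_transpose, hA,
      ← Matrix.mul_assoc]
  unfold aOrthogonalProj
  generalize (Pᵀ * A * P)⁻¹ = Q at hQ ⊢
  simp only [transpose_mul, transpose_transpose, hA, hQ, Matrix.mul_assoc]

theorem isIdempotentElem_aOrthogonalProj [DecidableEq m] {A : Matrix m m R} {P : Matrix m k R}
    (h : IsUnit (Pᵀ * A * P).det) : IsIdempotentElem (aOrthogonalProj A P) := by
  have hcancel : ∀ Z : Matrix k m R, (Pᵀ * A * P)⁻¹ * (Pᵀ * (A * (P * Z))) = Z := fun Z => by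
    rw [← Matrix.mul_assoc A, ← Matrix.mul_assoc Pᵀ, ← Matrix.mul_assoc Pᵀ A,
      nonsing_inv_mul_cancel_left _ _ h]
  unfold aOrthogonalProj
  generalize (Pᵀ * A * P)⁻¹ = Q at hcancel
  simp only [IsIdempotentElem, Matrix.mul_assoc, hcancel]

variable [DecidableEq m]

theorem transpose_one_sub_mul_eq_of {A X X' : Matrix m m R} (hX : Xᵀ * A = A * X') :
    (1 - X)ᵀ * A = A * (1 - X') := by
  rw [transpose_sub, transpose_one, sub_mul, mul_sub, hX, one_mul, mul_one]

theorem transpose_inv_mul_mul_eq {A : Matrix m m R} (hA : Aᵀ = A) (M : Matrix m m R) :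
    (M⁻¹ * A)ᵀ * A = A * (Mᵀ⁻¹ * A) := by
  rw [transpose_mul, hA, transpose_nonsing_inv, mul_assoc]

theorem conj_nonsing_inv_mul {S : Matrix m m R} (hSd : IsUnit S.det) (X Y : Matrix m m R) :
    S * (X * Y) * S⁻¹ = (S * X * S⁻¹) * (S * Y * S⁻¹) := by
  simp only [mul_assoc, nonsing_inv_mul_cancel_left _ _ hSd]

theorem transpose_conj_nonsing_inv {A S E F : Matrix m m R} (hS : Sᵀ * S = A)
    (hSd : IsUnit S.det) (h : Eᵀ * A = A * F) : (S * E * S⁻¹)ᵀ = S * F * S⁻¹ := by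
  have hSt : IsUnit Sᵀ.det := by rwa [det_transpose]
  rw [transpose_mul, transpose_mul, transpose_nonsing_inv]
  calc Sᵀ⁻¹ * (Eᵀ * Sᵀ) = Sᵀ⁻¹ * (Eᵀ * A) * S⁻¹ := by
        rw [← hS]; simp only [mul_assoc, mul_nonsing_inv _ hSd, mul_one]
    _ = S * F * S⁻¹ := by
        rw [h, ← hS, mul_assoc Sᵀ, nonsing_inv_mul_cancel_left _ _ hSt, mul_assoc]

end AAdjoint

end Matrix

theorem anorm_eq_norm_mulVec {n : ℕ} {A S : Matrix (Fin n) (Fin n) ℝ} (hS : Sᵀ * S = A)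
    (v : Fin n → ℝ) : anorm A v = ‖WithLp.toLp 2 (S *ᵥ v)‖ := by
  rw [anorm, ← hS, ← mulVec_mulVec, dotProduct_mulVec, vecMul_transpose, norm_eq_sqrt_real_inner,
    EuclideanSpace.inner_toLp_toLp, star_trivial, dotProduct_comm]

theorem opNormA_eq_l2_opNorm_conj {n : ℕ} {A S : Matrix (Fin n) (Fin n) ℝ} (hS : Sᵀ * S = A)
    (hSd : IsUnit S.det) (B : Matrix (Fin n) (Fin n) ℝ) : opNormA A B = ‖S * B * S⁻¹‖ := by
  let := invertibleOfIsUnitDet S hSd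
  let e : {v : Fin n → ℝ // v ≠ 0} ≃ {v : Fin n → ℝ // v ≠ 0} :=
    (toLinearEquiv' S ‹_›).toEquiv.subtypeEquiv
      fun _ => (LinearEquiv.map_ne_zero_iff (toLinearEquiv' S ‹_›)).symm
  have he : ∀ v, (e v : Fin n → ℝ) = S *ᵥ v := fun _ => rfl
  rw [opNormA, l2_opNorm_eq_iSup]
  conv_rhs => rw [← e.iSup_comp]
  refine iSup_congr fun v => ?_
  simp only [he, anorm_eq_norm_mulVec hS, mulVec_mulVec, mul_assoc, nonsing_inv_mul _ hSd, mul_one]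

theorem two_grid_norm_identities_general {n nc : ℕ}
    (A M : Matrix (Fin n) (Fin n) ℝ) (hA : A.PosDef)
    (P : Matrix (Fin n) (Fin nc) ℝ) (hP : Function.Injective P.mulVec)
    (piA : Matrix (Fin n) (Fin n) ℝ) (hpi : piA = P * (Pᵀ * A * P)⁻¹ * Pᵀ * A) :
    opNormA A ((1 - (Mᵀ)⁻¹ * A) * (1 - piA) * (1 - M⁻¹ * A))
        = (opNormA A ((1 - piA) * (1 - M⁻¹ * A))) ^ 2 ∧
      opNormA A ((1 - (Mᵀ)⁻¹ * A) * (1 - piA) * (1 - M⁻¹ * A))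
        = (opNormA A ((1 - (Mᵀ)⁻¹ * A) * (1 - piA))) ^ 2 := by
  change piA = aOrthogonalProj A P at hpi
  obtain ⟨S, hS, hSd⟩ := hA.exists_transpose_mul_self_eq
  have hAt : Aᵀ = A := by simpa only [conjTranspose_eq_transpose_of_trivial] using hA.isHermitian.eq
  have hPAP : IsUnit (Pᵀ * A * P).det := by
    simpa only [conjTranspose_eq_transpose_of_trivial, isUnit_iff_isUnit_det] using
      (hA.conjTranspose_mul_mul_same hP).isUnit
  have hπ : (1 - piA)ᵀ * A = A * (1 - piA) :=
    transpose_one_sub_mul_eq_of (hpi ▸ transpose_aOrthogonalProj_mul hAt P)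
  have hπ_idem : (1 - piA) * (1 - piA) = 1 - piA :=
    hpi ▸ (isIdempotentElem_aOrthogonalProj hPAP).one_sub
  set E := (1 - piA) * (1 - M⁻¹ * A)
  set F := (1 - (Mᵀ)⁻¹ * A) * (1 - piA)
  have hEF : Eᵀ * A = A * F :=
    transpose_mul_mul_eq_of hπ (transpose_one_sub_mul_eq_of (transpose_inv_mul_mul_eq hAt M))
  have hFE : F * (1 - M⁻¹ * A) = F * E := by
    simp only [F, E, mul_assoc, ← mul_assoc (1 - piA), hπ_idem]
  have hK : S * F * S⁻¹ = (S * E * S⁻¹)ᴴ := by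
    rw [conjTranspose_eq_transpose_of_trivial, transpose_conj_nonsing_inv hS hSd hEF]
  simp only [hFE, opNormA_eq_l2_opNorm_conj hS hSd, conj_nonsing_inv_mul hSd, hK,
    l2_opNorm_conjTranspose_mul_self, l2_opNorm_conjTranspose, sq, and_self]

theorem two_grid_norm_identities {n nc : ℕ}
    (A M : Matrix (Fin n) (Fin n) ℝ) (hA : A.PosDef)
    (hM : IsUnit M.det) (hMA : (M + Mᵀ - A).PosDef)
    (P : Matrix (Fin n) (Fin nc) ℝ) (hP : Function.Injective P.mulVec)
    (piA : Matrix (Fin n) (Fin n) ℝ) (hpi : piA = P * (Pᵀ * A * P)⁻¹ * Pᵀ * A) :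
    opNormA A ((1 - (Mᵀ)⁻¹ * A) * (1 - piA) * (1 - M⁻¹ * A))
        = (opNormA A ((1 - piA) * (1 - M⁻¹ * A))) ^ 2 ∧
      opNormA A ((1 - (Mᵀ)⁻¹ * A) * (1 - piA) * (1 - M⁻¹ * A))
        = (opNormA A ((1 - (Mᵀ)⁻¹ * A) * (1 - piA))) ^ 2 :=
  two_grid_norm_identities_general A M hA P hP piA hpi
end
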